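/- Let R(x,x') be a balanced difference bounds constraint over N variables, let n ≥ 1, and let ξ be an extremal path in G_R^n from x_i^(p) to x_j^(q) with 1 ≤ i,j ≤ N and p,q ∈ {0,n}, such that ξ has no long-corner subpath (lcorners(ξ) = ∅). Then for all valuations ν, ν' : x → ℤ such that (ν,ν') ∈ R_fw^n, (ν,ν') ∈ R_bw^n, ν ∈ S_fw, and ν' ∈ S_bw: (1) if p = 0 and q = n then ν(x_i) − ν'(x_j) ≤ w(ξ); (2) if p = n and q = 0 then ν'(x_i) − ν(x_j) ≤ w(ξ); (3) if p = q = 0 then ν(x_i) − ν(x_j) ≤ w(ξ); (4) if p = q = n then ν'(x_i) − ν'(x_j) ≤ w(ξ). -/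

import Mathlib

/- ## Difference bounds constraints and their relations -/

/-- Valuations of `N` integer variables. -/
abbrev Val (N : ℕ) := Fin N → ℤ

/-- An atomic proposition `u - v ≤ c` where `u, v` range over the unprimed
(`Sum.inl`) and primed (`Sum.inr`) variables. -/
abbrev Atom (N : ℕ) := (Fin N ⊕ Fin N) × (Fin N ⊕ Fin N) × ℤ

/-- A vertex of an unfolded constraint graph: a position together with a variable. -/
abbrev Vtx (N : ℕ) := ℤ × Fin N

/-- A difference bounds constraint: a finite conjunction of atomic propositions. -/
structure DBC (N : ℕ) where
  atoms : Finset (Atom N)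

/-- A path in an unfolded constraint graph: a first vertex followed by a list of
steps, each carrying a weight and a target vertex. -/
structure UPath (N : ℕ) where
  first : Vtx N
  steps : List (ℤ × Vtx N)

variable {N : ℕ}

def interp (ν ν' : Val N) : Fin N ⊕ Fin N → ℤ
  | Sum.inl i => ν i
  | Sum.inr i => ν' i

/-- The relation on valuations defined by a difference bounds constraint. -/
def DBC.rel (R : DBC N) (ν ν' : Val N) : Prop :=
  ∀ a ∈ R.atoms, interp ν ν' a.1 - interp ν ν' a.2.1 ≤ a.2.2

/-- Relational composition. -/
def relComp (P Q : Val N → Val N → Prop) (ν ν' : Val N) : Prop :=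
  ∃ μ, P ν μ ∧ Q μ ν'

/-- `n`-fold relational composition, with `relPow P 0` the identity relation. -/
def relPow (P : Val N → Val N → Prop) : ℕ → Val N → Val N → Prop
  | 0 => Eq
  | n + 1 => relComp P (relPow P n)

/-- A DB constraint is balanced when `x i - x j ≤ c` is a conjunct iff
`x' i - x' j ≤ c` is a conjunct. -/
def DBC.Balanced (R : DBC N) : Prop :=
  ∀ (i j : Fin N) (c : ℤ),
    (Sum.inl i, Sum.inl j, c) ∈ R.atoms ↔ (Sum.inr i, Sum.inr j, c) ∈ R.atoms

/-- Forward one-directional: every atom is of the form `x i - x' j ≤ c`. -/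
def DBC.IsFw (R : DBC N) : Prop :=
  ∀ a ∈ R.atoms, ∃ (i j : Fin N) (c : ℤ), a = (Sum.inl i, Sum.inr j, c)

/-- Backward one-directional: every atom is of the form `x' i - x j ≤ c`. -/
def DBC.IsBw (R : DBC N) : Prop :=
  ∀ a ∈ R.atoms, ∃ (i j : Fin N) (c : ℤ), a = (Sum.inr i, Sum.inl j, c)

def DBC.IsOneDirectional (R : DBC N) : Prop := R.IsFw ∨ R.IsBw

/- ## Unfolded constraint graphs -/

/-- The endpoint of an atom placed at copy `p` of the unfolding: unprimed
variables live at position `p`, primed ones at position `p + 1`. -/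
def endpt (p : ℤ) : Fin N ⊕ Fin N → Vtx N
  | Sum.inl i => (p, i)
  | Sum.inr i => (p + 1, i)

/-- Edge of the unfolding contributed by copy `p` of the constraint graph. -/
def DBC.EdgeAt (R : DBC N) (p : ℤ) (u v : Vtx N) (c : ℤ) : Prop :=
  ∃ s t, (s, t, c) ∈ R.atoms ∧ u = endpt p s ∧ v = endpt p t

/-- Edge of the bi-infinite unfolding. -/
def DBC.Edge (R : DBC N) (u v : Vtx N) (c : ℤ) : Prop :=
  ∃ p : ℤ, R.EdgeAt p u v c

/-- Edge of the `n`-times unfolding `G_R^n` (copies `0, …, n-1`). -/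
def DBC.EdgeN (R : DBC N) (n : ℕ) (u v : Vtx N) (c : ℤ) : Prop :=
  ∃ p : ℤ, 0 ≤ p ∧ p < (n : ℤ) ∧ R.EdgeAt p u v c

namespace UPath

/-- The list of vertices traversed by a path. -/
def vertices (ρ : UPath N) : List (Vtx N) := ρ.first :: ρ.steps.map Prod.snd

/-- The last vertex of a path. -/
def last (ρ : UPath N) : Vtx N := (ρ.steps.map Prod.snd).getLastD ρ.first

/-- The weight of a path: the sum of its edge weights. -/
def weight (ρ : UPath N) : ℤ := (ρ.steps.map Prod.fst).sum

def posList (ρ : UPath N) : List ℤ := ρ.vertices.map Prod.fst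

/-- The set of positions of the vertices of a path. -/
def posFinset (ρ : UPath N) : Finset ℤ := ρ.posList.toFinset

theorem posFinset_nonempty (ρ : UPath N) : ρ.posFinset.Nonempty := by
  refine ⟨ρ.first.1, ?_⟩
  simp [posFinset, posList, vertices]

/-- The extent of a path: the difference between its maximal and minimal
position. -/
def extent (ρ : UPath N) : ℤ :=
  ρ.posFinset.max' ρ.posFinset_nonempty - ρ.posFinset.min' ρ.posFinset_nonempty

/-- The list of variables traversed by a path. -/
def varList (ρ : UPath N) : List (Fin N) := ρ.vertices.map Prod.snd

/-- The steps form a chain of edges w.r.t. the edge relation `E`. -/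
def EdgeChain (E : Vtx N → Vtx N → ℤ → Prop) : Vtx N → List (ℤ × Vtx N) → Prop
  | _, [] => True
  | u, s :: rest => E u s.2 s.1 ∧ EdgeChain E s.2 rest

/-- The path lies in the bi-infinite unfolding of the constraint graph of `R`. -/
def InUnf (R : DBC N) (ρ : UPath N) : Prop := EdgeChain R.Edge ρ.first ρ.steps

/-- The path lies in the `n`-times unfolding `G_R^n`. -/
def InUnfN (R : DBC N) (n : ℕ) (ρ : UPath N) : Prop :=
  EdgeChain (R.EdgeN n) ρ.first ρ.steps

/-- Concatenation (the caller must ensure `π.first = ρ.last` for this to be a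
genuine path concatenation). -/
def append (ρ π : UPath N) : UPath N := ⟨ρ.first, ρ.steps ++ π.steps⟩

/-- Shift a path by `k` positions. -/
def shift (k : ℤ) (ρ : UPath N) : UPath N :=
  ⟨(ρ.first.1 + k, ρ.first.2), ρ.steps.map fun s => (s.1, (s.2.1 + k, s.2.2))⟩

/-- Concatenation with implicit shifting: `π` is shifted so that its first
vertex is at the position of the last vertex of `ρ`. -/
def glue (ρ π : UPath N) : UPath N := ρ.append (shift (ρ.last.1 - π.first.1) π)

/-- `k`-fold concatenation of a (repeating) path with itself, each copy shifted
so that its first vertex coincides with the last vertex of the previous copy. -/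
def pow (μ : UPath N) : ℕ → UPath N
  | 0 => ⟨μ.first, []⟩
  | k + 1 => (pow μ k).glue μ

def IsVertical (ρ : UPath N) : Prop := ρ.last.1 = ρ.first.1

def IsForward (ρ : UPath N) : Prop := ρ.first.1 < ρ.last.1

def IsBackward (ρ : UPath N) : Prop := ρ.last.1 < ρ.first.1

/-- A path is repeating if its endpoints are copies of the same variable at
different positions. -/
def IsRepeating (ρ : UPath N) : Prop := ρ.first.1 ≠ ρ.last.1 ∧ ρ.first.2 = ρ.last.2

/-- Relative length: the absolute difference of the first and last positions. -/
def relLen (ρ : UPath N) : ℤ := |ρ.last.1 - ρ.first.1|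

/-- Right corner of some extent `d`: a nonempty vertical path whose positions
are exactly `{k, …, k+d}` where `k` is its first (= last) position. -/
def IsRightCorner (ρ : UPath N) : Prop :=
  ρ.steps ≠ [] ∧ ρ.last.1 = ρ.first.1 ∧
  ∃ d : ℕ, ρ.posFinset = Finset.Icc ρ.first.1 (ρ.first.1 + (d : ℤ))

/-- Left corner of some extent `d`: positions exactly `{k−d, …, k}`. -/
def IsLeftCorner (ρ : UPath N) : Prop :=
  ρ.steps ≠ [] ∧ ρ.last.1 = ρ.first.1 ∧
  ∃ d : ℕ, ρ.posFinset = Finset.Icc (ρ.first.1 - (d : ℤ)) ρ.first.1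

def IsCorner (ρ : UPath N) : Prop := ρ.IsRightCorner ∨ ρ.IsLeftCorner

/-- A corner is basic if its start/end position does not occur among the
positions of its intermediate vertices. -/
def IsBasic (ρ : UPath N) : Prop :=
  ∀ s ∈ ρ.steps.dropLast, s.2.1 ≠ ρ.first.1

/-- A long corner: a corner of extent exceeding `N²`. -/
def IsLongCorner (ρ : UPath N) : Prop := ρ.IsCorner ∧ (N : ℤ) ^ 2 < ρ.extent

/-- An lb-corner: a corner that is both long and basic. -/
def IsLBCorner (ρ : UPath N) : Prop := ρ.IsLongCorner ∧ ρ.IsBasic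

/-- `θ` is a (contiguous) subpath of `ρ`. -/
def IsSubpath (θ ρ : UPath N) : Prop :=
  ∃ pre post, ρ.steps = pre ++ θ.steps ++ post ∧ θ.first = (UPath.mk ρ.first pre).last

/-- A path is essential if its traversed variables are pairwise distinct,
except that the first and the last variable may coincide. -/
def IsEssential (ρ : UPath N) : Prop :=
  ∀ (a b : ℕ) (ha : a < ρ.varList.length) (hb : b < ρ.varList.length),
    a < b → ρ.varList.get ⟨a, ha⟩ = ρ.varList.get ⟨b, hb⟩ →
      a = 0 ∧ b = ρ.varList.length - 1

/-- An extremal path of `G_R^n`: both endpoints are at position `0` or `n`. -/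
def IsExtremalIn (n : ℕ) (ρ : UPath N) : Prop :=
  (ρ.first.1 = 0 ∨ ρ.first.1 = (n : ℤ)) ∧ (ρ.last.1 = 0 ∨ ρ.last.1 = (n : ℤ))

/-- `ρ'` is compatible with `ρ`: same first vertex, same last vertex and weight
not greater than that of `ρ`. -/
def Compatible (ρ' ρ : UPath N) : Prop :=
  ρ'.first = ρ.first ∧ ρ'.last = ρ.last ∧ ρ'.weight ≤ ρ.weight

/-- A path in `G_R^n` is normalized if none of its subpaths traversing only
positions in `{N², …, n−N²}` is a long corner. -/
def IsNormalized (n : ℕ) (ρ : UPath N) : Prop :=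
  ∀ θ : UPath N, θ.IsSubpath ρ →
    θ.posFinset ⊆ Finset.Icc ((N : ℤ) ^ 2) ((n : ℤ) - (N : ℤ) ^ 2) →
    ¬ θ.IsLongCorner

end UPath

/- ## UPath schemes -/

/-- `σ.λ*.σ'` is a path scheme: `λ` is empty or an essential repeating path,
the variables match up for concatenation, and `σ.λ.σ'` is a non-empty path. -/
def IsSchemeTriple (σ lam σ' : UPath N) : Prop :=
  (lam.steps = [] ∨ (lam.IsEssential ∧ lam.IsRepeating)) ∧
  lam.first.2 = σ.last.2 ∧ σ'.first.2 = lam.last.2 ∧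
  (σ.glue (lam.glue σ')).steps ≠ []

/-- The element `σ.λ^m.σ'` of the set of paths denoted by the scheme `σ.λ*.σ'`. -/
def schemeElem (σ lam σ' : UPath N) (m : ℕ) : UPath N :=
  σ.glue ((lam.pow m).glue σ')

/-- Shape of the `λ` component of a scheme of the class `Π_{ijkpq}`:
a path `x_k^(0) → … → x_k^(p)` of length `p` in the unfolding. -/
def LamShape (R : DBC N) (k : Fin N) (p : ℕ) (lam : UPath N) : Prop :=
  lam.InUnf R ∧ lam.first = ((0 : ℤ), k) ∧ lam.last = ((p : ℤ), k) ∧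
  lam.steps.length = p

/-- Shape of the `σ, σ'` components of a scheme of the class `Π_{ijkpq}`:
`σ : x_i^(0) → … → x_k^(r)` and `σ' : x_k^(r) → … → x_j^(q)` for some
`0 ≤ r ≤ q`, with `|σ.σ'| = q`. -/
def SigmaShape (R : DBC N) (i j k : Fin N) (q : ℕ) (σ σ' : UPath N) : Prop :=
  ∃ r : ℕ, r ≤ q ∧ σ.InUnf R ∧ σ'.InUnf R ∧
    σ.first = ((0 : ℤ), i) ∧ σ.last = ((r : ℤ), k) ∧
    σ'.first = ((r : ℤ), k) ∧ σ'.last = ((q : ℤ), j) ∧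
    σ.steps.length + σ'.steps.length = q

/-- Membership of the scheme `σ.λ*.σ'` in the class `Π_{ijkpq}`. -/
def InPi (R : DBC N) (i j k : Fin N) (p q : ℕ) (σ lam σ' : UPath N) : Prop :=
  IsSchemeTriple σ lam σ' ∧ LamShape R k p lam ∧ SigmaShape R i j k q σ σ'

/-- The set `S_ij` of quadruples `(|σ.σ'|, |λ|, w(σ.σ'), w(λ))` arising from the
minimal representative schemes `θ_{ijkpq}` of the nonempty classes `Π_{ijkpq}`. -/
def Sset (R : DBC N) (i j : Fin N) : Set (ℕ × ℕ × ℤ × ℤ) :=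
  { t | ∃ (k : Fin N) (p q : ℕ) (σ lam σ' : UPath N),
      p ≤ N ∧ q ≤ N ^ 4 ∧ 0 < p + q ∧
      (∃ ν μ ν' : UPath N, InPi R i j k p q ν μ ν') ∧
      LamShape R k p lam ∧
      (∀ lam', LamShape R k p lam' → lam.weight ≤ lam'.weight) ∧
      SigmaShape R i j k q σ σ' ∧
      (∀ σ₁ σ₁', SigmaShape R i j k q σ₁ σ₁' →
        σ.weight + σ'.weight ≤ σ₁.weight + σ₁'.weight) ∧
      t = (q, p, σ.weight + σ'.weight, lam.weight) }

/- ## Segments -/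

/-- An edge from `u` to `v` has both endpoints at positions within `{p, …, q}`. -/
def StepInRange (p q : ℤ) (u v : Vtx N) : Prop :=
  p ≤ u.1 ∧ u.1 ≤ q ∧ p ≤ v.1 ∧ v.1 ≤ q

/-- `ξ` is an element of `segments(ρ, p, q)`: a nonempty maximal subpath of `ρ`
whose positions lie within `{p, …, q}`, immediately preceded and followed (if at
all) by edges not lying within `{p, …, q}`. -/
def IsSegmentOf (ρ : UPath N) (p q : ℤ) (ξ : UPath N) : Prop :=
  ξ.steps ≠ [] ∧
  ∃ pre post, ρ.steps = pre ++ ξ.steps ++ post ∧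
    ξ.first = (UPath.mk ρ.first pre).last ∧
    ξ.posFinset ⊆ Finset.Icc p q ∧
    (∀ pre' c u, pre = pre' ++ [(c, u)] →
      ¬ StepInRange p q (UPath.mk ρ.first pre').last u) ∧
    (∀ c v post', post = (c, v) :: post' → ¬ StepInRange p q ξ.last v)

/- ## The strengthened relation and one-directional approximations -/

/-- `S_fw`: the valuations `ν` such that `∃ ν'. (ν,ν') ∈ R^{N²}`. -/
def Sfw (R : DBC N) (ν : Val N) : Prop := ∃ ν', relPow R.rel (N ^ 2) ν ν'

/-- `S_bw`: the valuations `ν'` such that `∃ ν. (ν,ν') ∈ R^{N²}`. -/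
def Sbw (R : DBC N) (ν' : Val N) : Prop := ∃ ν, relPow R.rel (N ^ 2) ν ν'

/-- The strengthened relation `R_s = R ∧ S_fw(x) ∧ S_bw(x')`. -/
def Rs (R : DBC N) (ν ν' : Val N) : Prop := R.rel ν ν' ∧ Sfw R ν ∧ Sbw R ν'

/-- `R_fw`: the strongest forward one-directional DB relation implied by `R_s`. -/
def Rfw (R : DBC N) (ν ν' : Val N) : Prop :=
  ∀ (i j : Fin N) (c : ℤ), (∀ μ μ', Rs R μ μ' → μ i - μ' j ≤ c) → ν i - ν' j ≤ c

/-- `R_bw`: the strongest backward one-directional DB relation implied by `R_s`. -/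
def Rbw (R : DBC N) (ν ν' : Val N) : Prop :=
  ∀ (i j : Fin N) (c : ℤ), (∀ μ μ', Rs R μ μ' → μ' i - μ j ≤ c) → ν' i - ν j ≤ c

/- ## Corner decompositions -/

/-- The pumped path `η.μ^k.τ.μ'^k.η'`. -/
def pumped (η μ τ μ' η' : UPath N) (k : ℕ) : UPath N :=
  η.glue ((μ.pow k).glue (τ.glue ((μ'.pow k).glue η')))

/-- The decomposition `ρ' = η.μ.τ.μ'.η'` of a right corner as in the corner
shortening / decomposition lemma. -/
def DecompRight (ρ' : UPath N) : Prop :=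
  ∃ η μ τ μ' η' : UPath N,
    ρ' = η.append (μ.append (τ.append (μ'.append η'))) ∧
    μ.first = η.last ∧ τ.first = μ.last ∧ μ'.first = τ.last ∧ η'.first = μ'.last ∧
    μ.IsForward ∧ μ.IsRepeating ∧ μ'.IsBackward ∧ μ'.IsRepeating ∧
    τ.IsRightCorner ∧
    η.relLen = η'.relLen ∧
    1 ≤ μ.relLen ∧ μ.relLen = μ'.relLen ∧ μ.relLen ≤ (N : ℤ) ^ 2 ∧
    μ.weight + μ'.weight < 0 ∧
    ∀ k : ℕ,
      (pumped η μ τ μ' η' k).IsRightCorner ∧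
      (∀ θ : UPath N, θ.IsSubpath (η.glue (μ.pow k)) → ¬ θ.IsLBCorner) ∧
      (∀ θ : UPath N, θ.IsSubpath ((μ'.pow k).glue η') → ¬ θ.IsLBCorner)

/-- The decomposition `ρ' = η.μ.τ.μ'.η'` of a left corner as in the corner
shortening / decomposition lemma. -/
def DecompLeft (ρ' : UPath N) : Prop :=
  ∃ η μ τ μ' η' : UPath N,
    ρ' = η.append (μ.append (τ.append (μ'.append η'))) ∧
    μ.first = η.last ∧ τ.first = μ.last ∧ μ'.first = τ.last ∧ η'.first = μ'.last ∧
    μ.IsBackward ∧ μ.IsRepeating ∧ μ'.IsForward ∧ μ'.IsRepeating ∧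
    τ.IsLeftCorner ∧
    η.relLen = η'.relLen ∧
    1 ≤ μ.relLen ∧ μ.relLen = μ'.relLen ∧ μ.relLen ≤ (N : ℤ) ^ 2 ∧
    μ.weight + μ'.weight < 0 ∧
    ∀ k : ℕ,
      (pumped η μ τ μ' η' k).IsLeftCorner ∧
      (∀ θ : UPath N, θ.IsSubpath (η.glue (μ.pow k)) → ¬ θ.IsLBCorner) ∧
      (∀ θ : UPath N, θ.IsSubpath ((μ'.pow k).glue η') → ¬ θ.IsLBCorner)

/- ## Balanced closure -/

/-- Swap an unprimed-unprimed atom with its primed-primed counterpart. -/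
def flipAtom : Atom N → Atom N
  | (Sum.inl i, Sum.inl j, c) => (Sum.inr i, Sum.inr j, c)
  | (Sum.inr i, Sum.inr j, c) => (Sum.inl i, Sum.inl j, c)
  | a => a

/-- The balanced closure `R_b` of a DB constraint `R`. -/
def DBC.balClosure (R : DBC N) : DBC N := ⟨R.atoms ∪ R.atoms.image flipAtom⟩


/-!
Give each position `p` of the unfolding a valuation `f p`, with `R (f p) (f (p + 1))` between
consecutive positions of a window. Summing the atoms along a path inside the window bounds
`f p i - f q j` by the weight of the path from `(p, i)` to `(q, j)`; by balancedness this also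
covers horizontal edges on the boundary of the window. A vertical path staying on one side of its start is
a corner, so without long corners it lives in a window of width `N²`, for which `S_fw` (resp.
`S_bw`) supplies such valuations: this settles `p = q`. For `p = 0`, `q = n`, cut the path at its
last departure from each level `k`. The piece before the cut, an excursion above level `k` followed
by an up-edge, yields a constraint `x_a - x'_b ≤ c` valid on `R_s`, hence on the `k`-th factor of
`R_fw^n`; the final piece is horizontal at level `n` and is absorbed by `R` in the last factor.
The case `p = n`, `q = 0` is the mirror image with `R_bw`.
-/

namespace DBC

variable {N : ℕ} {R : DBC N} {u v : Vtx N} {c : ℤ}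

theorem EdgeN.edge {n : ℕ} (h : R.EdgeN n u v c) : R.Edge u v c :=
  let ⟨p, _, _, hp⟩ := h
  ⟨p, hp⟩

theorem EdgeN.fst_mem {n : ℕ} (h : R.EdgeN n u v c) : 0 ≤ v.1 ∧ v.1 ≤ n := by
  obtain ⟨p, hp0, hpn, s, t, -, -, rfl⟩ := h
  cases t <;> simp only [endpt] <;> omega

theorem Edge.fst_le (h : R.Edge u v c) : v.1 ≤ u.1 + 1 := by
  obtain ⟨p, s, t, -, rfl, rfl⟩ := h
  cases s <;> cases t <;> simp only [endpt] <;> omega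

theorem Edge.le_fst (h : R.Edge u v c) : u.1 - 1 ≤ v.1 := by
  obtain ⟨p, s, t, -, rfl, rfl⟩ := h
  cases s <;> cases t <;> simp only [endpt] <;> omega

theorem Edge.mem_atoms_of_up (h : R.Edge u v c) (hv : v.1 = u.1 + 1) :
    (Sum.inl u.2, Sum.inr v.2, c) ∈ R.atoms := by
  obtain ⟨p, s, t, ha, rfl, rfl⟩ := h
  cases s <;> cases t
  case inl.inr => exact ha
  all_goals simp only [endpt] at hv; omega

theorem Edge.mem_atoms_of_down (h : R.Edge u v c) (hv : v.1 = u.1 - 1) :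
    (Sum.inr u.2, Sum.inl v.2, c) ∈ R.atoms := by
  obtain ⟨p, s, t, ha, rfl, rfl⟩ := h
  cases s <;> cases t
  case inr.inl => exact ha
  all_goals simp only [endpt] at hv; omega

theorem EdgeAt.sub_le_of_rel {f : ℤ → Val N} {q : ℤ} (h : R.EdgeAt q u v c)
    (hrel : R.rel (f q) (f (q + 1))) : f u.1 u.2 - f v.1 v.2 ≤ c := by
  obtain ⟨s, t, ha, rfl, rfl⟩ := h
  have := hrel _ ha
  cases s <;> cases t <;> simpa [endpt, interp] using this

/-- A horizontal edge on the boundary of the window is the copy, provided by balancedness,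
of a horizontal edge of the neighbouring copy inside the window. -/
theorem Edge.exists_edgeAt_of_balanced (hbal : R.Balanced) {lo hi : ℤ} (hlt : lo < hi)
    (h : R.Edge u v c) (hu : lo ≤ u.1 ∧ u.1 ≤ hi) (hv : lo ≤ v.1 ∧ v.1 ≤ hi) :
    ∃ q, lo ≤ q ∧ q < hi ∧ R.EdgeAt q u v c := by
  obtain ⟨p, s, t, ha, rfl, rfl⟩ := h
  cases s with
  | inl a =>
    cases t with
    | inl b =>
      simp only [endpt] at hu hv
      by_cases hp : p < hi
      · exact ⟨p, hu.1, hp, _, _, ha, rfl, rfl⟩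
      · exact ⟨p - 1, by omega, by omega, _, _, (hbal a b c).1 ha, by simp [endpt],
          by simp [endpt]⟩
    | inr b =>
      simp only [endpt] at hu hv
      exact ⟨p, hu.1, by omega, _, _, ha, rfl, rfl⟩
  | inr a =>
    cases t with
    | inl b =>
      simp only [endpt] at hu hv
      exact ⟨p, hv.1, by omega, _, _, ha, rfl, rfl⟩
    | inr b =>
      simp only [endpt] at hu hv
      by_cases hp : lo ≤ p
      · exact ⟨p, hp, by omega, _, _, ha, rfl, rfl⟩
      · exact ⟨p + 1, hu.1, by omega, _, _, (hbal a b c).2 ha, by simp [endpt],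
          by simp [endpt]⟩

end DBC

namespace UPath

variable {N : ℕ} {R : DBC N} {ρ θ : UPath N}

@[simp]
theorem last_mk_nil (u : Vtx N) : (⟨u, []⟩ : UPath N).last = u := rfl

@[simp]
theorem last_mk_cons (u : Vtx N) (s : ℤ × Vtx N) (l : List (ℤ × Vtx N)) :
    (⟨u, s :: l⟩ : UPath N).last = (⟨s.2, l⟩ : UPath N).last := by
  rw [last, List.map_cons, List.getLastD_cons]; rfl

theorem last_mk_append (u : Vtx N) (l₁ l₂ : List (ℤ × Vtx N)) :
    (⟨u, l₁ ++ l₂⟩ : UPath N).last = (⟨(⟨u, l₁⟩ : UPath N).last, l₂⟩ : UPath N).last := by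
  induction l₁ generalizing u <;> simp [*]

theorem first_mem_vertices (ρ : UPath N) : ρ.first ∈ ρ.vertices := List.mem_cons_self

theorem last_mem_vertices (ρ : UPath N) : ρ.last ∈ ρ.vertices := List.getLastD_mem_cons

theorem edgeChain_append {E : Vtx N → Vtx N → ℤ → Prop} (u : Vtx N)
    (l₁ l₂ : List (ℤ × Vtx N)) :
    EdgeChain E u (l₁ ++ l₂) ↔
      EdgeChain E u l₁ ∧ EdgeChain E (⟨u, l₁⟩ : UPath N).last l₂ := by
  induction l₁ generalizing u with
  | nil => simp [EdgeChain]
  | cons s l ih => simp [EdgeChain, ih, and_assoc]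

theorem IsSubpath.refl (ρ : UPath N) : ρ.IsSubpath ρ := ⟨[], [], by simp, rfl⟩

theorem IsSubpath.trans (h₁ : θ.IsSubpath ρ) {ξ : UPath N} (h₂ : ρ.IsSubpath ξ) :
    θ.IsSubpath ξ := by
  obtain ⟨pre₁, post₁, hs₁, hf₁⟩ := h₁
  obtain ⟨pre₂, post₂, hs₂, hf₂⟩ := h₂
  refine ⟨pre₂ ++ pre₁, post₁ ++ post₂, by simp [hs₂, hs₁], ?_⟩
  rw [hf₁, last_mk_append, ← hf₂]

theorem isSubpath_prefix (u : Vtx N) (pre post : List (ℤ × Vtx N)) :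
    (⟨u, pre⟩ : UPath N).IsSubpath ⟨u, pre ++ post⟩ :=
  ⟨[], post, by simp, rfl⟩

theorem IsSubpath.vertices_subset (h : θ.IsSubpath ρ) : θ.vertices ⊆ ρ.vertices := by
  obtain ⟨pre, post, hs, hf⟩ := h
  intro v hv
  rcases List.mem_cons.1 hv with rfl | hv
  · rw [hf]
    have := last_mem_vertices ⟨ρ.first, pre⟩
    simp only [vertices, hs, List.map_append, List.mem_cons, List.mem_append] at this ⊢
    tauto
  · simp only [vertices, hs, List.map_append, List.mem_cons, List.mem_append]
    tauto

theorem IsSubpath.inUnf (h : θ.IsSubpath ρ) (hρ : ρ.InUnf R) : θ.InUnf R := by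
  obtain ⟨pre, post, hs, hf⟩ := h
  unfold InUnf at hρ ⊢
  rw [hs, edgeChain_append, edgeChain_append] at hρ
  exact hf ▸ hρ.1.2

theorem InUnfN.inUnf {n : ℕ} (h : ρ.InUnfN R n) : ρ.InUnf R := by
  obtain ⟨u, l⟩ := ρ
  induction l generalizing u with
  | nil => trivial
  | cons s l ih => exact ⟨h.1.edge, ih s.2 h.2⟩

theorem InUnfN.mem_window {n : ℕ} (h : ρ.InUnfN R n) (h0 : 0 ≤ ρ.first.1)
    (hn : ρ.first.1 ≤ n) : ∀ v ∈ ρ.vertices, 0 ≤ v.1 ∧ v.1 ≤ n := by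
  obtain ⟨u, l⟩ := ρ
  induction l generalizing u with
  | nil => simpa [vertices] using ⟨h0, hn⟩
  | cons s l ih =>
    intro v hv
    rcases List.mem_cons.1 hv with rfl | hv
    · exact ⟨h0, hn⟩
    · exact ih s.2 h.2 h.1.fst_mem.1 h.1.fst_mem.2 v hv

theorem mem_posFinset {x : ℤ} : x ∈ ρ.posFinset ↔ ∃ v ∈ ρ.vertices, v.1 = x := by
  simp [posFinset, posList]

theorem posFinset_mk_cons (u : Vtx N) (s : ℤ × Vtx N) (l : List (ℤ × Vtx N)) :
    (⟨u, s :: l⟩ : UPath N).posFinset = insert u.1 (⟨s.2, l⟩ : UPath N).posFinset := by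
  simp [posFinset, posList, vertices]

theorem InUnf.exists_posFinset_eq_Icc (hρ : ρ.InUnf R) :
    ∃ a b, ρ.posFinset = Finset.Icc a b := by
  obtain ⟨u, l⟩ := ρ
  induction l generalizing u with
  | nil => exact ⟨u.1, u.1, by simp [posFinset, posList, vertices]⟩
  | cons s l ih =>
    obtain ⟨a, b, hab⟩ := ih s.2 hρ.2
    have hs : s.2.1 ∈ Finset.Icc a b := hab ▸ mem_posFinset.2 ⟨s.2, first_mem_vertices _, rfl⟩
    have h₁ : s.2.1 ≤ u.1 + 1 := hρ.1.fst_le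
    have h₂ : u.1 - 1 ≤ s.2.1 := hρ.1.le_fst
    refine ⟨min u.1 a, max u.1 b, ?_⟩
    rw [posFinset_mk_cons, hab]
    ext x
    simp only [Finset.mem_Icc, Finset.mem_insert, min_le_iff, le_max_iff] at hs ⊢
    omega

theorem sub_le_extent {v w : Vtx N} (hv : v ∈ ρ.vertices) (hw : w ∈ ρ.vertices) :
    v.1 - w.1 ≤ ρ.extent := by
  have := ρ.posFinset.le_max' v.1 (mem_posFinset.2 ⟨v, hv, rfl⟩)
  have := ρ.posFinset.min'_le w.1 (mem_posFinset.2 ⟨w, hw, rfl⟩)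
  unfold extent
  omega

theorem InUnf.isRightCorner (hρ : ρ.InUnf R) (hne : ρ.steps ≠ [])
    (hvert : ρ.last.1 = ρ.first.1) (habove : ∀ v ∈ ρ.vertices, ρ.first.1 ≤ v.1) :
    ρ.IsRightCorner := by
  obtain ⟨a, b, hab⟩ := hρ.exists_posFinset_eq_Icc
  have hfirst : ρ.first.1 ∈ Finset.Icc a b := hab ▸ mem_posFinset.2 ⟨_, first_mem_vertices ρ, rfl⟩
  rw [Finset.mem_Icc] at hfirst
  obtain ⟨v, hv, rfl⟩ : ∃ v ∈ ρ.vertices, v.1 = a :=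
    mem_posFinset.1 (hab ▸ Finset.left_mem_Icc.2 (hfirst.1.trans hfirst.2))
  refine ⟨hne, hvert, (b - ρ.first.1).toNat, ?_⟩
  rw [hab]
  have := habove v hv
  congr 1 <;> omega

theorem InUnf.isLeftCorner (hρ : ρ.InUnf R) (hne : ρ.steps ≠ [])
    (hvert : ρ.last.1 = ρ.first.1) (hbelow : ∀ v ∈ ρ.vertices, v.1 ≤ ρ.first.1) :
    ρ.IsLeftCorner := by
  obtain ⟨a, b, hab⟩ := hρ.exists_posFinset_eq_Icc
  have hfirst : ρ.first.1 ∈ Finset.Icc a b := hab ▸ mem_posFinset.2 ⟨_, first_mem_vertices ρ, rfl⟩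
  rw [Finset.mem_Icc] at hfirst
  obtain ⟨v, hv, rfl⟩ : ∃ v ∈ ρ.vertices, v.1 = b :=
    mem_posFinset.1 (hab ▸ Finset.right_mem_Icc.2 (hfirst.1.trans hfirst.2))
  refine ⟨hne, hvert, (ρ.first.1 - a).toNat, ?_⟩
  rw [hab]
  have := hbelow v hv
  congr 1 <;> omega

def LongCornerFree (ρ : UPath N) : Prop := ∀ θ : UPath N, θ.IsSubpath ρ → ¬ θ.IsLongCorner

theorem LongCornerFree.mono (hρ : ρ.LongCornerFree) (hθ : θ.IsSubpath ρ) :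
    θ.LongCornerFree :=
  fun θ' h => hρ θ' (h.trans hθ)

theorem LongCornerFree.extent_le (hρ : ρ.LongCornerFree) (hc : ρ.IsCorner) :
    ρ.extent ≤ (N : ℤ) ^ 2 :=
  not_lt.1 fun h => hρ ρ (IsSubpath.refl ρ) ⟨hc, h⟩

theorem LongCornerFree.le_add_sq_of_above (hfree : ρ.LongCornerFree) (hρ : ρ.InUnf R)
    (hvert : ρ.last.1 = ρ.first.1) (habove : ∀ v ∈ ρ.vertices, ρ.first.1 ≤ v.1) :
    ∀ v ∈ ρ.vertices, v.1 ≤ ρ.first.1 + (N : ℤ) ^ 2 := by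
  intro v hv
  rcases eq_or_ne ρ.steps [] with hnil | hne
  · obtain ⟨u, l⟩ := ρ
    subst hnil
    obtain rfl : v = u := by simpa [vertices] using hv
    have : (0 : ℤ) ≤ (N : ℤ) ^ 2 := by positivity
    dsimp only
    omega
  · have := hfree.extent_le (Or.inl (hρ.isRightCorner hne hvert habove))
    have := sub_le_extent hv (first_mem_vertices ρ)
    omega

theorem LongCornerFree.sub_sq_le_of_below (hfree : ρ.LongCornerFree) (hρ : ρ.InUnf R)
    (hvert : ρ.last.1 = ρ.first.1) (hbelow : ∀ v ∈ ρ.vertices, v.1 ≤ ρ.first.1) :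
    ∀ v ∈ ρ.vertices, ρ.first.1 - (N : ℤ) ^ 2 ≤ v.1 := by
  intro v hv
  rcases eq_or_ne ρ.steps [] with hnil | hne
  · obtain ⟨u, l⟩ := ρ
    subst hnil
    obtain rfl : v = u := by simpa [vertices] using hv
    have : (0 : ℤ) ≤ (N : ℤ) ^ 2 := by positivity
    dsimp only
    omega
  · have := hfree.extent_le (Or.inr (hρ.isLeftCorner hne hvert hbelow))
    have := sub_le_extent (first_mem_vertices ρ) hv
    omega

theorem InUnf.sub_le_weight_of_window (hbal : R.Balanced) {f : ℤ → Val N} {lo hi : ℤ}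
    (hlt : lo < hi) (hf : ∀ p, lo ≤ p → p < hi → R.rel (f p) (f (p + 1)))
    (hρ : ρ.InUnf R) (hwin : ∀ v ∈ ρ.vertices, lo ≤ v.1 ∧ v.1 ≤ hi) :
    f ρ.first.1 ρ.first.2 - f ρ.last.1 ρ.last.2 ≤ ρ.weight := by
  obtain ⟨u, l⟩ := ρ
  induction l generalizing u with
  | nil => simp [weight]
  | cons s l ih =>
    have hu := hwin u (first_mem_vertices _)
    have hs := hwin s.2 (by simp [vertices])
    obtain ⟨q, hlo, hhi, hq⟩ := hρ.1.exists_edgeAt_of_balanced hbal hlt hu hs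
    have hedge := hq.sub_le_of_rel (hf q hlo hhi)
    have hrest := ih s.2 hρ.2 fun v hv => hwin v (List.mem_cons_of_mem _ hv)
    simp only [last_mk_cons, weight, List.map_cons, List.sum_cons] at hrest ⊢
    linarith

theorem InUnf.sub_le_weight_of_rel (hbal : R.Balanced) {μ μ' : Val N} (hrel : R.rel μ μ')
    (b : ℤ) (hρ : ρ.InUnf R) (hwin : ∀ v ∈ ρ.vertices, b ≤ v.1 ∧ v.1 ≤ b + 1) :
    (if ρ.first.1 ≤ b then μ else μ') ρ.first.2 - (if ρ.last.1 ≤ b then μ else μ') ρ.last.2 ≤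
      ρ.weight :=
  hρ.sub_le_weight_of_window hbal (f := fun p => if p ≤ b then μ else μ') (lt_add_one b)
    (fun p h₁ h₂ => by obtain rfl : p = b := (by omega); simpa using hrel) hwin

end UPath

section RelPow

variable {N : ℕ} {P : Val N → Val N → Prop}

theorem relPow_exists_chain :
    ∀ {m : ℕ} {ν ν' : Val N}, relPow P m ν ν' → ∀ k : ℤ, ∃ f : ℤ → Val N,
      f k = ν ∧ f (k + m) = ν' ∧ ∀ p, k ≤ p → p < k + m → P (f p) (f (p + 1))
  | 0, ν, _, rfl, _ => ⟨fun _ => ν, rfl, rfl, fun p h₁ h₂ => by omega⟩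
  | m + 1, ν, ν', ⟨μ, hνμ, hμν'⟩, k => by
    obtain ⟨f, hfk, hfm, hf⟩ := relPow_exists_chain hμν' (k + 1)
    refine ⟨fun p => if p = k then ν else f p, by simp, ?_, fun p h₁ h₂ => ?_⟩
    · have hpos : k + ((m + 1 : ℕ) : ℤ) = k + 1 + m := by push_cast; ring
      simp only [hpos, if_neg (show k + 1 + (m : ℤ) ≠ k by omega), hfm]
    · by_cases hp : p = k
      · subst hp
        simpa [hfk] using hνμ
      · simp only [if_neg hp, if_neg (show p + 1 ≠ k by omega)]
        exact hf p (by omega) (by push_cast at h₂; omega)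

theorem relPow_succ' :
    ∀ {m : ℕ} {ν ν' : Val N}, relPow P (m + 1) ν ν' → ∃ κ, relPow P m ν κ ∧ P κ ν'
  | 0, ν, _, ⟨μ, hνμ, rfl⟩ => ⟨ν, rfl, hνμ⟩
  | _ + 1, _, _, ⟨μ, hνμ, hμν'⟩ =>
    let ⟨κ, hμκ, hκν'⟩ := relPow_succ' hμν'
    ⟨κ, ⟨μ, hνμ, hμκ⟩, hκν'⟩

end RelPow

namespace UPath

variable {N : ℕ} {R : DBC N} {ρ : UPath N}

theorem LongCornerFree.sub_le_weight_of_sfw (hN : 1 ≤ N) (hbal : R.Balanced) {ν : Val N}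
    (hν : Sfw R ν) (hfree : ρ.LongCornerFree) (hρ : ρ.InUnf R)
    (hvert : ρ.last.1 = ρ.first.1) (habove : ∀ v ∈ ρ.vertices, ρ.first.1 ≤ v.1) :
    ν ρ.first.2 - ν ρ.last.2 ≤ ρ.weight := by
  obtain ⟨ν', hνν'⟩ := hν
  obtain ⟨f, hf₀, -, hf⟩ := relPow_exists_chain hνν' ρ.first.1
  have hbound := hfree.le_add_sq_of_above hρ hvert habove
  have := hρ.sub_le_weight_of_window hbal (by push_cast; nlinarith) hf
    fun v hv => ⟨habove v hv, by push_cast; exact hbound v hv⟩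
  rwa [hvert, hf₀] at this

theorem LongCornerFree.sub_le_weight_of_sbw (hN : 1 ≤ N) (hbal : R.Balanced) {ν' : Val N}
    (hν' : Sbw R ν') (hfree : ρ.LongCornerFree) (hρ : ρ.InUnf R)
    (hvert : ρ.last.1 = ρ.first.1) (hbelow : ∀ v ∈ ρ.vertices, v.1 ≤ ρ.first.1) :
    ν' ρ.first.2 - ν' ρ.last.2 ≤ ρ.weight := by
  obtain ⟨ν, hνν'⟩ := hν'
  obtain ⟨f, -, hfM, hf⟩ := relPow_exists_chain hνν' (ρ.first.1 - (N : ℤ) ^ 2)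
  have htop : ρ.first.1 - (N : ℤ) ^ 2 + ((N ^ 2 : ℕ) : ℤ) = ρ.first.1 := by push_cast; ring
  rw [htop] at hfM hf
  have hbound := hfree.sub_sq_le_of_below hρ hvert hbelow
  have := hρ.sub_le_weight_of_window hbal (by nlinarith) hf
    fun v hv => ⟨hbound v hv, hbelow v hv⟩
  rwa [hvert, hfM] at this

theorem exists_split_of_edgeChain {E : Vtx N → Vtx N → ℤ → Prop} (φ : Vtx N → ℤ)
    (hE : ∀ u v c, E u v c → φ v ≤ φ u + 1) (b : ℤ) (u : Vtx N) (l : List (ℤ × Vtx N))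
    (hl : EdgeChain E u l) (hu : φ u ≤ b) (hlast : b < φ (⟨u, l⟩ : UPath N).last) :
    ∃ pre c u' suf, l = pre ++ (c, u') :: suf ∧ φ (⟨u, pre⟩ : UPath N).last ≤ b ∧
      φ u' = b + 1 ∧ ∀ s ∈ suf, b < φ s.2 := by
  induction l using List.reverseRecOn with
  | nil => exact absurd hlast (not_lt.2 hu)
  | append_singleton l s ih =>
    rw [edgeChain_append] at hl
    rw [last_mk_append, last_mk_cons, last_mk_nil] at hlast
    by_cases hl' : φ (⟨u, l⟩ : UPath N).last ≤ b
    · have := hE _ _ _ hl.2.1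
      exact ⟨l, s.1, s.2, [], by simp, hl', by omega, by simp⟩
    · obtain ⟨pre, c, u', suf, rfl, h₁, h₂, h₃⟩ := ih hl.1 (by omega)
      refine ⟨pre, c, u', suf ++ [s], by simp, h₁, h₂, fun t ht => ?_⟩
      rcases List.mem_append.1 ht with ht | ht
      · exact h₃ t ht
      · obtain rfl := List.mem_singleton.1 ht
        exact hlast

/-- The last time an ascending path leaves its starting level splits it into an excursion above
that level (controlled by `S_fw`), one up-edge, and a remainder strictly above the level. -/
theorem LongCornerFree.exists_ascent_split (hN : 1 ≤ N) (hbal : R.Balanced)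
    (hfree : ρ.LongCornerFree) (hρ : ρ.InUnf R) (habove : ∀ v ∈ ρ.vertices, ρ.first.1 ≤ v.1)
    (hlast : ρ.first.1 < ρ.last.1) :
    ∃ (w : ℤ) (σ : UPath N), σ.IsSubpath ρ ∧ σ.first.1 = ρ.first.1 + 1 ∧ σ.last = ρ.last ∧
      ρ.weight = w + σ.weight ∧ (∀ v ∈ σ.vertices, ρ.first.1 + 1 ≤ v.1) ∧
      ∀ μ μ', Rs R μ μ' → μ ρ.first.2 - μ' σ.first.2 ≤ w := by
  obtain ⟨u, l⟩ := ρ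
  obtain ⟨pre, c, u', suf, rfl, hpre, hu', hsuf⟩ :=
    exists_split_of_edgeChain Prod.fst (fun _ _ _ h => h.fst_le) u.1 u l hρ le_rfl hlast
  have hπρ := isSubpath_prefix u pre ((c, u') :: suf)
  have hπabove := fun v hv => habove v (hπρ.vertices_subset hv)
  have hπlast : (⟨u, pre⟩ : UPath N).last.1 = u.1 :=
    le_antisymm hpre (hπabove _ (last_mem_vertices _))
  have hedge := ((edgeChain_append (E := R.Edge) u pre _).1 hρ).2.1
  have hatom := hedge.mem_atoms_of_up (by dsimp only; omega)
  refine ⟨(⟨u, pre⟩ : UPath N).weight + c, ⟨u', suf⟩, ⟨pre ++ [(c, u')], [], by simp, ?_⟩, hu',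
    ?_, ?_, fun v hv => ?_, fun μ μ' hs => ?_⟩
  · simp [last_mk_append]
  · simp [last_mk_append]
  · simp only [weight, List.map_append, List.map_cons, List.sum_append, List.sum_cons]
    ring
  · rcases List.mem_cons.1 hv with rfl | hv
    · exact hu'.ge
    · obtain ⟨t, ht, rfl⟩ := List.mem_map.1 hv
      exact hsuf t ht
  · have h₁ := (hfree.mono hπρ).sub_le_weight_of_sfw hN hbal hs.2.1 (hπρ.inUnf hρ) hπlast hπabove
    have h₂ := hs.1 _ hatom
    simp only [interp] at h₁ h₂
    linarith

theorem LongCornerFree.exists_descent_split (hN : 1 ≤ N) (hbal : R.Balanced)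
    (hfree : ρ.LongCornerFree) (hρ : ρ.InUnf R) (hbelow : ∀ v ∈ ρ.vertices, v.1 ≤ ρ.first.1)
    (hlast : ρ.last.1 < ρ.first.1) :
    ∃ (w : ℤ) (σ : UPath N), σ.IsSubpath ρ ∧ σ.first.1 = ρ.first.1 - 1 ∧ σ.last = ρ.last ∧
      ρ.weight = w + σ.weight ∧ (∀ v ∈ σ.vertices, v.1 ≤ ρ.first.1 - 1) ∧
      ∀ μ μ', Rs R μ μ' → μ' ρ.first.2 - μ σ.first.2 ≤ w := by
  obtain ⟨u, l⟩ := ρ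
  obtain ⟨pre, c, u', suf, rfl, hpre, hu', hsuf⟩ :=
    exists_split_of_edgeChain (fun v => -v.1) (fun _ _ _ h => by have := h.le_fst; omega)
      (-u.1) u l hρ le_rfl (by simp only at hlast ⊢; omega)
  have hπρ := isSubpath_prefix u pre ((c, u') :: suf)
  have hπbelow := fun v hv => hbelow v (hπρ.vertices_subset hv)
  have hπlast : (⟨u, pre⟩ : UPath N).last.1 = u.1 :=
    le_antisymm (hπbelow _ (last_mem_vertices _)) (by omega)
  have hedge := ((edgeChain_append (E := R.Edge) u pre _).1 hρ).2.1
  have hatom := hedge.mem_atoms_of_down (by dsimp only; omega)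
  refine ⟨(⟨u, pre⟩ : UPath N).weight + c, ⟨u', suf⟩, ⟨pre ++ [(c, u')], [], by simp, ?_⟩,
    by simp only at hu' ⊢; omega, ?_, ?_, fun v hv => ?_, fun μ μ' hs => ?_⟩
  · simp [last_mk_append]
  · simp [last_mk_append]
  · simp only [weight, List.map_append, List.map_cons, List.sum_append, List.sum_cons]
    ring
  · rcases List.mem_cons.1 hv with rfl | hv
    · simp only at hu' ⊢; omega
    · obtain ⟨t, ht, rfl⟩ := List.mem_map.1 hv
      have := hsuf t ht
      simp only at this ⊢; omega
  · have h₁ := (hfree.mono hπρ).sub_le_weight_of_sbw hN hbal hs.2.2 (hπρ.inUnf hρ) hπlast hπbelow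
    have h₂ := hs.1 _ hatom
    simp only [interp] at h₁ h₂
    linarith

theorem LongCornerFree.sub_le_weight_of_ascent (hN : 1 ≤ N) (hbal : R.Balanced) (m : ℕ) :
    ∀ {ρ : UPath N} {ν ν' : Val N}, ρ.LongCornerFree → ρ.InUnf R →
      (∀ v ∈ ρ.vertices, ρ.first.1 ≤ v.1 ∧ v.1 ≤ ρ.first.1 + m + 1) →
      ρ.last.1 = ρ.first.1 + m + 1 → relPow (Rfw R) (m + 1) ν ν' →
      ν ρ.first.2 - ν' ρ.last.2 ≤ ρ.weight := by
  induction m with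
  | zero =>
    rintro ρ ν ν' hfree hρ hwin hlast ⟨_, hstep, rfl⟩
    simp only [Nat.cast_zero, add_zero] at hwin hlast
    obtain ⟨w, σ, hσρ, hσfirst, hσlast, hweight, hσabove, hcross⟩ :=
      hfree.exists_ascent_split hN hbal hρ (fun v hv => (hwin v hv).1) (by omega)
    have hflat : ∀ μ μ', Rs R μ μ' → μ' σ.first.2 - μ' σ.last.2 ≤ σ.weight := fun μ μ' hs => by
      have := (hσρ.inUnf hρ).sub_le_weight_of_rel hbal hs.1 ρ.first.1 fun v hv =>
        ⟨by linarith [hσabove v hv], by linarith [(hwin v (hσρ.vertices_subset hv)).2]⟩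
      simpa [hσfirst, hσlast, hlast] using this
    rw [hweight, ← hσlast]
    exact hstep _ _ _ fun μ μ' hs => by linarith [hcross μ μ' hs, hflat μ μ' hs]
  | succ m ih =>
    rintro ρ ν ν' hfree hρ hwin hlast ⟨ν₁, hstep, hrest⟩
    obtain ⟨w, σ, hσρ, hσfirst, hσlast, hweight, hσabove, hcross⟩ :=
      hfree.exists_ascent_split hN hbal hρ (fun v hv => (hwin v hv).1) (by omega)
    have h₁ := hstep _ _ _ hcross
    have h₂ := ih (hfree.mono hσρ) (hσρ.inUnf hρ)
      (fun v hv => ⟨by linarith [hσabove v hv],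
        by have := (hwin v (hσρ.vertices_subset hv)).2; push_cast at this; linarith⟩)
      (by rw [hσlast, hσfirst]; push_cast at hlast; linarith) hrest
    rw [hweight, ← hσlast]
    linarith

theorem LongCornerFree.sub_le_weight_of_descent (hN : 1 ≤ N) (hbal : R.Balanced) (m : ℕ) :
    ∀ {ρ : UPath N} {ν ν' : Val N}, ρ.LongCornerFree → ρ.InUnf R →
      (∀ v ∈ ρ.vertices, ρ.last.1 ≤ v.1 ∧ v.1 ≤ ρ.last.1 + m + 1) →
      ρ.first.1 = ρ.last.1 + m + 1 → relPow (Rbw R) (m + 1) ν ν' →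
      ν' ρ.first.2 - ν ρ.last.2 ≤ ρ.weight := by
  induction m with
  | zero =>
    rintro ρ ν ν' hfree hρ hwin hfirst hpow
    obtain ⟨_, rfl, hstep⟩ := relPow_succ' hpow
    simp only [Nat.cast_zero, add_zero] at hwin hfirst
    obtain ⟨w, σ, hσρ, hσfirst, hσlast, hweight, hσbelow, hcross⟩ :=
      hfree.exists_descent_split hN hbal hρ (fun v hv => by linarith [(hwin v hv).2]) (by omega)
    have hflat : ∀ μ μ', Rs R μ μ' → μ σ.first.2 - μ σ.last.2 ≤ σ.weight := fun μ μ' hs => by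
      have := (hσρ.inUnf hρ).sub_le_weight_of_rel hbal hs.1 ρ.last.1 fun v hv =>
        ⟨by linarith [(hwin v (hσρ.vertices_subset hv)).1], by linarith [hσbelow v hv]⟩
      simpa [hσfirst, hσlast, hfirst] using this
    rw [hweight, ← hσlast]
    exact hstep _ _ _ fun μ μ' hs => by linarith [hcross μ μ' hs, hflat μ μ' hs]
  | succ m ih =>
    rintro ρ ν ν' hfree hρ hwin hfirst hpow
    obtain ⟨κ, hrest, hstep⟩ := relPow_succ' hpow
    obtain ⟨w, σ, hσρ, hσfirst, hσlast, hweight, hσbelow, hcross⟩ :=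
      hfree.exists_descent_split hN hbal hρ (fun v hv => by linarith [(hwin v hv).2]) (by omega)
    have h₁ := hstep _ _ _ hcross
    have h₂ := ih (hfree.mono hσρ) (hσρ.inUnf hρ)
      (fun v hv => ⟨by rw [hσlast]; exact (hwin v (hσρ.vertices_subset hv)).1,
        by have := hσbelow v hv; push_cast at hfirst; rw [hσlast]; linarith⟩)
      (by rw [hσlast, hσfirst]; push_cast at hfirst; linarith) hrest
    rw [hweight, ← hσlast]
    linarith

end UPath

theorem statement17_general (N : ℕ) (hN : 1 ≤ N) (R : DBC N) (hbal : R.Balanced)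
    (n : ℕ) (hn : 1 ≤ n) (ξ : UPath N) (i j : Fin N) (p q : ℤ)
    (hf : ξ.first = (p, i)) (hl : ξ.last = (q, j))
    (hξ : ξ.InUnfN R n)
    (hnolc : ∀ θ : UPath N, θ.IsSubpath ξ → ¬ θ.IsLongCorner) :
    ∀ ν ν' : Val N, relPow (Rfw R) n ν ν' → relPow (Rbw R) n ν ν' →
      Sfw R ν → Sbw R ν' →
      (p = 0 ∧ q = (n : ℤ) → ν i - ν' j ≤ ξ.weight) ∧
      (p = (n : ℤ) ∧ q = 0 → ν' i - ν j ≤ ξ.weight) ∧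
      (p = 0 ∧ q = 0 → ν i - ν j ≤ ξ.weight) ∧
      (p = (n : ℤ) ∧ q = (n : ℤ) → ν' i - ν' j ≤ ξ.weight) := by
  intro ν ν' hfw hbw hν hν'
  have hfree : ξ.LongCornerFree := hnolc
  have hρ : ξ.InUnf R := hξ.inUnf
  have hwin : 0 ≤ p → p ≤ n → ∀ v ∈ ξ.vertices, 0 ≤ v.1 ∧ v.1 ≤ n := fun h₀ hₙ =>
    hξ.mem_window (by rw [hf]; exact h₀) (by rw [hf]; exact hₙ)
  obtain ⟨m, rfl⟩ : ∃ m, n = m + 1 := ⟨n - 1, by omega⟩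
  push_cast at hwin ⊢
  refine ⟨?_, ?_, ?_, ?_⟩ <;> rintro ⟨rfl, rfl⟩
  · simpa [hf, hl] using hfree.sub_le_weight_of_ascent hN hbal m hρ
      (by simpa [hf] using hwin le_rfl (by omega)) (by simp [hf, hl]) hfw
  · simpa [hf, hl] using hfree.sub_le_weight_of_descent hN hbal m hρ
      (by simpa [hl] using hwin (by omega) le_rfl) (by simp [hf, hl]) hbw
  · simpa [hf, hl] using hfree.sub_le_weight_of_sfw hN hbal hν hρ (by simp [hf, hl])
      (by simpa [hf] using fun v hv => (hwin le_rfl (by omega) v hv).1)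
  · simpa [hf, hl] using hfree.sub_le_weight_of_sbw hN hbal hν' hρ (by simp [hf, hl])
      (by simpa [hf] using fun v hv => (hwin (by omega) le_rfl v hv).2)

/-- Encoding of extremal paths without long corners: the
formula `R_fw^n ∧ R_bw^n ∧ S_fw(x) ∧ S_bw(x')` implies the constraint of every
extremal path of `G_R^n` with no long-corner subpath. -/
theorem statement17 (N : ℕ) (hN : 1 ≤ N) (R : DBC N) (hbal : R.Balanced)
    (n : ℕ) (hn : 1 ≤ n) (ξ : UPath N) (i j : Fin N) (p q : ℤ)
    (hp : p = 0 ∨ p = (n : ℤ)) (hq : q = 0 ∨ q = (n : ℤ))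
    (hf : ξ.first = (p, i)) (hl : ξ.last = (q, j))
    (hξ : ξ.InUnfN R n)
    (hnolc : ∀ θ : UPath N, θ.IsSubpath ξ → ¬ θ.IsLongCorner) :
    ∀ ν ν' : Val N, relPow (Rfw R) n ν ν' → relPow (Rbw R) n ν ν' →
      Sfw R ν → Sbw R ν' →
      (p = 0 ∧ q = (n : ℤ) → ν i - ν' j ≤ ξ.weight) ∧
      (p = (n : ℤ) ∧ q = 0 → ν' i - ν j ≤ ξ.weight) ∧
      (p = 0 ∧ q = 0 → ν i - ν j ≤ ξ.weight) ∧
      (p = (n : ℤ) ∧ q = (n : ℤ) → ν' i - ν' j ≤ ξ.weight) :=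
  statement17_general N hN R hbal n hn ξ i j p q hf hl hξ hnolc
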